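/- arXiv:2007.15788 — 3 statements merged into one kernel-verified Lean document; each statement's English description precedes it below -/
import Mathlib

section
/- For matrices X, X̂ ∈ ℝ^{p×q} where X has rank r with r-th singular value σ_r(X) > 0, if Û⊥ ∈ ℝ^{p×(p-r)} has orthonormal columns orthogonal to the top-r left singular vectors Û of X̂, then ‖Û⊥ᵀ U‖_F ≤ ‖X̂ − X‖_F / σ_r(X), where U ∈ ℝ^{p×r} contains the top-r left singular vectors of X. -/
/-!
Every column of `Uperp` is orthogonal to the column space of `Uhat`, which contains that of
`Xhat`, so `Uperpᵀ X = -Uperpᵀ (Xhat - X)`; projecting onto orthonormal columns does not increase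
the Frobenius norm, hence `‖Uperpᵀ X‖_F ≤ ‖Xhat - X‖_F`. On the other hand `X = U (Uᵀ X)`, and
`Uᵀ X` stretches every row vector by at least `σ`, so `σ ‖Uperpᵀ U‖_F ≤ ‖Uperpᵀ U (Uᵀ X)‖_F
= ‖Uperpᵀ X‖_F`.
-/

open Matrix BigOperators

noncomputable def frob {m n : Type*} [Fintype m] [Fintype n]
    (A : Matrix m n ℝ) : ℝ :=
  Real.sqrt (∑ i, ∑ j, (A i j) ^ 2)

section Frobenius

variable {m n k : Type*} [Fintype m] [Fintype n]

lemma frob_nonneg (A : Matrix m n ℝ) : 0 ≤ frob A := Real.sqrt_nonneg _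

lemma frob_sq (A : Matrix m n ℝ) : frob A ^ 2 = ∑ i, ∑ j, A i j ^ 2 :=
  Real.sq_sqrt <| Finset.sum_nonneg fun _ _ => Finset.sum_nonneg fun _ _ => sq_nonneg _

lemma frob_sq_eq_trace (A : Matrix m n ℝ) : frob A ^ 2 = trace (Aᵀ * A) := by
  rw [frob_sq]
  simp only [trace, diag, mul_apply, transpose_apply, sq]
  exact Finset.sum_comm

lemma frob_neg (A : Matrix m n ℝ) : frob (-A) = frob A := by
  simp [frob]

/-- Pythagoras: `‖M‖_F² = ‖Vᵀ M‖_F² + ‖M - V Vᵀ M‖_F²`. -/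
lemma frob_transpose_mul_le [Fintype k] [DecidableEq k] {V : Matrix m k ℝ}
    (hV : Vᵀ * V = 1) (M : Matrix m n ℝ) : frob (Vᵀ * M) ≤ frob M := by
  have hVV : ∀ Z : Matrix k n ℝ, Vᵀ * (V * Z) = Z := fun Z => by
    rw [← Matrix.mul_assoc, hV, Matrix.one_mul]
  have hresidual : (M - V * (Vᵀ * M))ᵀ * (M - V * (Vᵀ * M)) = Mᵀ * M - (Vᵀ * M)ᵀ * (Vᵀ * M) := by
    simp only [transpose_sub, transpose_mul, transpose_transpose, Matrix.sub_mul,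
      Matrix.mul_sub, Matrix.mul_assoc, hVV]
    abel
  have h := sq_nonneg (frob (M - V * (Vᵀ * M)))
  rw [frob_sq_eq_trace, hresidual, trace_sub, ← frob_sq_eq_trace, ← frob_sq_eq_trace] at h
  exact (pow_le_pow_iff_left₀ (frob_nonneg _) (frob_nonneg M) two_ne_zero).mp (sub_nonneg.mp h)

lemma mul_frob_le_frob_mul [Fintype k] {σ : ℝ} (hσ : 0 ≤ σ) {M : Matrix n k ℝ}
    (hM : ∀ v : n → ℝ, σ * Real.sqrt (∑ i, v i ^ 2) ≤ Real.sqrt (∑ j, vecMul v M j ^ 2))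
    (A : Matrix m n ℝ) : σ * frob A ≤ frob (A * M) := by
  have hrow : ∀ i, σ ^ 2 * ∑ j, A i j ^ 2 ≤ ∑ j, (A * M) i j ^ 2 := fun i => by
    have h := pow_le_pow_left₀ (mul_nonneg hσ (Real.sqrt_nonneg _)) (hM (A i)) 2
    rwa [mul_pow, Real.sq_sqrt (Finset.sum_nonneg fun _ _ => sq_nonneg _),
      Real.sq_sqrt (Finset.sum_nonneg fun _ _ => sq_nonneg _), ← mul_apply_eq_vecMul] at h
  rw [← pow_le_pow_iff_left₀ (mul_nonneg hσ (frob_nonneg A)) (frob_nonneg _) two_ne_zero,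
    mul_pow, frob_sq, frob_sq, Finset.mul_sum]
  exact Finset.sum_le_sum fun i _ => hrow i

end Frobenius

theorem stmt0_general {p q r : ℕ}
    (X Xhat : Matrix (Fin p) (Fin q) ℝ)
    (U Uhat : Matrix (Fin p) (Fin r) ℝ)
    (Uperp : Matrix (Fin p) (Fin (p - r)) ℝ)
    (σ : ℝ) (hσ : 0 < σ)
    (hU : U * U.transpose * X = X)
    (hUhatrank : Uhat * Uhat.transpose * Xhat = Xhat)
    (hperp_orth : Uperp.transpose * Uperp = 1)
    (hperpUhat : Uperp.transpose * Uhat = 0)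
    (hσval : ∀ v : Fin r → ℝ,
      σ * Real.sqrt (∑ i, (v i) ^ 2) ≤
        Real.sqrt (∑ j, (Matrix.vecMul v (U.transpose * X) j) ^ 2)) :
    frob (Uperp.transpose * U) ≤ frob (Xhat - X) / σ := by
  have hXhat : Uperpᵀ * Xhat = 0 := by
    rw [← hUhatrank, ← Matrix.mul_assoc, ← Matrix.mul_assoc, hperpUhat, Matrix.zero_mul,
      Matrix.zero_mul]
  have hX : Uperpᵀ * U * (Uᵀ * X) = -(Uperpᵀ * (Xhat - X)) := by
    rw [Matrix.mul_assoc, ← Matrix.mul_assoc U, hU, Matrix.mul_sub, hXhat, zero_sub, neg_neg]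
  rw [le_div_iff₀ hσ, mul_comm]
  calc σ * frob (Uperpᵀ * U) ≤ frob (Uperpᵀ * U * (Uᵀ * X)) := mul_frob_le_frob_mul hσ.le hσval _
    _ = frob (Uperpᵀ * (Xhat - X)) := by rw [hX, frob_neg]
    _ ≤ frob (Xhat - X) := frob_transpose_mul_le hperp_orth _

/-- If `U Uᵀ X = X` (X has rank r with left singular vectors `U`),
`σ > 0` is a lower bound on the singular values of `Uᵀ X` (i.e. the r-th singular
value of X), `Uhat` contains the top-r left singular vectors of `Xhat`
(so `Uhat Uhatᵀ Xhat = Xhat`), and `Uperp` has orthonormal columns orthogonal to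
`Uhat`, then `‖Uperpᵀ U‖_F ≤ ‖Xhat − X‖_F / σ`. -/
theorem stmt0 {p q r : ℕ}
    (X Xhat : Matrix (Fin p) (Fin q) ℝ)
    (U Uhat : Matrix (Fin p) (Fin r) ℝ)
    (Uperp : Matrix (Fin p) (Fin (p - r)) ℝ)
    (σ : ℝ) (hσ : 0 < σ)
    (hU : U * U.transpose * X = X)
    (hUorth : U.transpose * U = 1)
    (hUhatrank : Uhat * Uhat.transpose * Xhat = Xhat)
    (hperp_orth : Uperp.transpose * Uperp = 1)
    (hperpUhat : Uperp.transpose * Uhat = 0)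
    (hσval : ∀ v : Fin r → ℝ,
      σ * Real.sqrt (∑ i, (v i) ^ 2) ≤
        Real.sqrt (∑ j, (Matrix.vecMul v (U.transpose * X) j) ^ 2)) :
    frob (Uperp.transpose * U) ≤ frob (Xhat - X) / σ :=
  stmt0_general X Xhat U Uhat Uperp σ hσ hU hUhatrank hperp_orth hperpUhat hσval
end

section
/- Let s: ℕ → ℝ_{>0} be a nondecreasing sequence and let n₂ ≥ 1. Define K* = min{K ≥ 1 : Σ_{k=1}^{K} (1 + ⌈s(k)⌉) ≥ n₂} (assume the set is nonempty). Then for every u ∈ {1, ..., n₂} with u ≤ K* − 1, we have K* ≤ u + (n₂ − u)/s(u). -/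
open BigOperators Finset

/- Since `K* - 1` fails the defining inequality, `K* - 1` exploration steps together with
the exploitation steps of the epochs `u, …, K* - 1`, each at least `⌈s u⌉` long by
monotonicity, number fewer than `n₂`. Hence `K* + (K* - u) ⌈s u⌉ ≤ n₂`, and dividing by
`s u ≤ ⌈s u⌉` gives the bound. -/

theorem nsmul_le_sum_Icc_of_monotone {α : Type*} [AddCommMonoid α] [PartialOrder α]
    [IsOrderedAddMonoid α] {f : ℕ → α} (hf : Monotone f) (hf0 : ∀ k, 0 ≤ f k) {a u : ℕ}
    (hau : a ≤ u) (M : ℕ) : (M + 1 - u) • f u ≤ ∑ k ∈ Icc a M, f k :=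
  calc (M + 1 - u) • f u = #(Icc u M) • f u := by rw [Nat.card_Icc]
    _ ≤ ∑ k ∈ Icc u M, f k := card_nsmul_le_sum _ _ _ fun k hk => hf (mem_Icc.1 hk).1
    _ ≤ ∑ k ∈ Icc a M, f k :=
      sum_le_sum_of_subset_of_nonneg (Icc_subset_Icc_left hau) fun k _ _ => hf0 k

theorem add_mul_ceil_le_sum_Icc_one_add_ceil {s : ℕ → ℝ} (hpos : ∀ k, 0 < s k)
    (hmono : Monotone s) {u M : ℕ} (hu : 1 ≤ u) (huM : u ≤ M + 1) :
    (M : ℤ) + ((M : ℤ) + 1 - u) * ⌈s u⌉ ≤ ∑ k ∈ Icc 1 M, (1 + ⌈s k⌉) := by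
  have hceil := nsmul_le_sum_Icc_of_monotone (fun _ _ h => Int.ceil_le_ceil (hmono h))
    (fun k => (Int.ceil_pos.2 (hpos k)).le) hu M
  rw [nsmul_eq_mul, Nat.cast_sub huM] at hceil
  rw [sum_add_distrib, sum_const, Nat.card_Icc, nsmul_eq_mul]
  push_cast at hceil ⊢
  linarith

theorem le_add_div_of_add_mul_le {K u n x c : ℝ} (hx : 0 < x) (hxc : x ≤ c) (huK : u ≤ K)
    (h : K + (K - u) * c ≤ n) : K ≤ u + (n - u) / x := by
  rw [← sub_le_iff_le_add', le_div_iff₀ hx]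
  nlinarith [mul_le_mul_of_nonneg_left hxc (sub_nonneg.2 huK)]

theorem stmt6_general (s : ℕ → ℝ) (hpos : ∀ k, 0 < s k) (hmono : Monotone s)
    (n₂ : ℕ) (Kstar : ℕ)
    (hKmin : ∀ K : ℕ, 1 ≤ K →
      (n₂ : ℤ) ≤ (∑ k ∈ Finset.Icc 1 K, (1 + ⌈s k⌉)) → Kstar ≤ K) :
    ∀ u : ℕ, 1 ≤ u → u ≤ n₂ → u ≤ Kstar - 1 →
      (Kstar : ℝ) ≤ u + ((n₂ : ℝ) - u) / s u := by
  intro u hu1 _ huK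
  have hsum_lt : ∑ k ∈ Icc 1 (Kstar - 1), (1 + ⌈s k⌉) < (n₂ : ℤ) :=
    lt_of_not_ge fun h => by have := hKmin _ (hu1.trans huK) h; omega
  have hbound := add_mul_ceil_le_sum_Icc_one_add_ceil hpos hmono hu1 (M := Kstar - 1)
    (by omega)
  rw [Nat.cast_sub (by omega : 1 ≤ Kstar), Nat.cast_one] at hbound
  have hint : (Kstar : ℤ) + (Kstar - u) * ⌈s u⌉ ≤ n₂ := by linarith
  have huK' : (u : ℝ) ≤ Kstar := by exact_mod_cast (by omega : u ≤ Kstar)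
  exact le_add_div_of_add_mul_le (hpos u) (Int.le_ceil _) huK' (by exact_mod_cast hint)

/-- Let `s : ℕ → ℝ` be a positive nondecreasing sequence, `n₂ ≥ 1`,
and let `K*` be the least `K ≥ 1` with `Σ_{k=1}^{K} (1 + ⌈s(k)⌉) ≥ n₂`. Then
for every `u ∈ {1,...,n₂}` with `u ≤ K* − 1`, we have
`K* ≤ u + (n₂ − u)/s(u)`. -/
theorem stmt6 (s : ℕ → ℝ) (hpos : ∀ k, 0 < s k) (hmono : Monotone s)
    (n₂ : ℕ) (hn₂ : 1 ≤ n₂) (Kstar : ℕ) (hK1 : 1 ≤ Kstar)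
    (hKge : (n₂ : ℤ) ≤ ∑ k ∈ Finset.Icc 1 Kstar, (1 + ⌈s k⌉))
    (hKmin : ∀ K : ℕ, 1 ≤ K →
      (n₂ : ℤ) ≤ (∑ k ∈ Finset.Icc 1 K, (1 + ⌈s k⌉)) → Kstar ≤ K) :
    ∀ u : ℕ, 1 ≤ u → u ≤ n₂ → u ≤ Kstar - 1 →
      (Kstar : ℝ) ≤ u + ((n₂ : ℝ) - u) / s u :=
  stmt6_general s hpos hmono n₂ Kstar hKmin
end

section
/- Let Λ = diag(λ₁,...,λ₁, λ₂,...,λ₂) ∈ ℝ^{d×d} with the first q diagonal entries equal to λ₁ > 0 and the remaining d − q entries equal to λ₂ > 0, and let A₁,...,A_n ∈ ℝ^d with ‖A_t‖₂ ≤ 1 for all t. Define V_n = Λ + Σ_{t=1}^n A_t A_tᵀ. If λ₂ = n/(q log(1 + n/λ₁)), then log(det(V_n)/det(Λ)) ≤ 2q log(1 + n/λ₁). -/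
/-!
Hadamard's inequality `det V ≤ ∏ Vᵢᵢ` (normalise the diagonal of `V` to `1`, then apply AM–GM to
the eigenvalues) bounds `log (det V_n / det Λ)` by `∑ᵢ log (1 + Sᵢᵢ / Λᵢᵢ)`, where
`S = ∑ₜ Aₜ Aₜᵀ` has nonnegative diagonal with trace at most `n`. Each of the first `q` terms is at
most `log (1 + n / λ₁)`, and by `log (1 + x) ≤ x` the others add up to at most
`n / λ₂ = q log (1 + n / λ₁)`.
-/

open Finset Matrix

lemma Real.prod_le_one_of_sum_le_card {ι : Type*} [Fintype ι] {f : ι → ℝ}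
    (hf : ∀ i, 0 ≤ f i) (hsum : ∑ i, f i ≤ Fintype.card ι) : ∏ i, f i ≤ 1 := by
  by_cases! hpos : ∀ i, 0 < f i
  · rw [← Real.exp_log (prod_pos fun i _ => hpos i), Real.log_prod fun i _ => (hpos i).ne',
      Real.exp_le_one_iff]
    calc ∑ i, Real.log (f i) ≤ ∑ i, (f i - 1) :=
          sum_le_sum fun i _ => Real.log_le_sub_one_of_pos (hpos i)
      _ ≤ 0 := by simpa [sum_sub_distrib] using hsum
  · obtain ⟨i, hi⟩ := hpos
    rw [prod_eq_zero (mem_univ i) (le_antisymm hi (hf i))]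
    exact zero_le_one

namespace Matrix

lemma trace_sum_vecMulVec_self {ι τ : Type*} [Fintype ι] [Fintype τ] (A : τ → ι → ℝ) :
    (∑ t, vecMulVec (A t) (A t)).trace = ∑ t, ∑ i, A t i ^ 2 := by
  simp only [trace_sum, trace_vecMulVec, dotProduct, sq]

variable {ι : Type*} [Fintype ι] [DecidableEq ι]

lemma PosSemidef.det_le_one_of_trace_le_card {B : Matrix ι ι ℝ} (hB : B.PosSemidef)
    (htr : B.trace ≤ Fintype.card ι) : B.det ≤ 1 := by
  rw [hB.isHermitian.det_eq_prod_eigenvalues]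
  refine Real.prod_le_one_of_sum_le_card hB.eigenvalues_nonneg ?_
  simpa [hB.isHermitian.trace_eq_sum_eigenvalues] using htr

lemma PosDef.det_le_prod_diag {V : Matrix ι ι ℝ} (hV : V.PosDef) : V.det ≤ ∏ i, V i i := by
  set D : Matrix ι ι ℝ := diagonal fun i => (√(V i i))⁻¹
  have hprod : 0 < ∏ i, V i i := prod_pos fun i _ => hV.diag_pos
  have hB : (D * V * D).PosSemidef := by
    simpa [D] using hV.posSemidef.conjTranspose_mul_mul_same D
  have hdiag : ∀ i, (D * V * D) i i = 1 := fun i => by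
    have hVi := hV.diag_pos (i := i)
    simp only [D, mul_diagonal, diagonal_mul]
    calc (√(V i i))⁻¹ * V i i * (√(V i i))⁻¹ = V i i / (√(V i i) * √(V i i)) := by ring
      _ = 1 := by rw [Real.mul_self_sqrt hVi.le, div_self hVi.ne']
  have hdet : (D * V * D).det = V.det / ∏ i, V i i := by
    have hsq : ∏ i, V i i = (∏ i, √(V i i)) * ∏ i, √(V i i) := by
      rw [← prod_mul_distrib]
      exact prod_congr rfl fun i _ => (Real.mul_self_sqrt hV.diag_pos.le).symm
    rw [det_mul, det_mul, det_diagonal, hsq, prod_inv_distrib]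
    ring
  have := hB.det_le_one_of_trace_le_card (by simp [trace, hdiag])
  rwa [hdet, div_le_one hprod] at this

lemma log_det_add_div_det_diagonal_le {w : ι → ℝ} (hw : ∀ i, 0 < w i) {S : Matrix ι ι ℝ}
    (hS : S.PosSemidef) :
    Real.log ((diagonal w + S).det / (diagonal w).det) ≤ ∑ i, Real.log (1 + S i i / w i) := by
  have hV : (diagonal w + S).PosDef := (PosDef.diagonal hw).add_posSemidef hS
  have hterm : ∀ i, 0 < 1 + S i i / w i := fun i => by
    have := div_nonneg (hS.diag_nonneg (i := i)) (hw i).le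
    linarith
  rw [det_diagonal, ← Real.log_prod fun i _ => (hterm i).ne']
  refine Real.log_le_log (div_pos hV.det_pos (prod_pos fun i _ => hw i)) ?_
  calc (diagonal w + S).det / ∏ i, w i ≤ (∏ i, (diagonal w + S) i i) / ∏ i, w i :=
        div_le_div_of_nonneg_right hV.det_le_prod_diag (prod_pos fun i _ => hw i).le
    _ = ∏ i, (1 + S i i / w i) := by
        rw [← prod_div_distrib]
        refine prod_congr rfl fun i _ => ?_
        simp [add_div, (hw i).ne']

end Matrix

lemma sum_log_one_add_div_ite_le {ι : Type*} [Fintype ι] (p : ι → Prop) [DecidablePred p]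
    {q : ℕ} (hp : #{i | p i} ≤ q) {a b n : ℝ} (ha : 0 < a) (hb : 0 < b) {s : ι → ℝ}
    (hs : ∀ i, 0 ≤ s i) (hsum : ∑ i, s i ≤ n) :
    ∑ i, Real.log (1 + s i / if p i then a else b) ≤ q * Real.log (1 + n / a) + n / b := by
  have hn : 0 ≤ n := (sum_nonneg fun i _ => hs i).trans hsum
  have hsn : ∀ i, s i ≤ n := fun i => (single_le_sum (fun j _ => hs j) (mem_univ i)).trans hsum
  rw [← sum_filter_add_sum_filter_not univ p]
  gcongr ?_ + ?_
  · calc ∑ i ∈ {i | p i}, Real.log (1 + s i / if p i then a else b)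
        ≤ ∑ i ∈ {i | p i}, Real.log (1 + n / a) := sum_le_sum fun i hi => by
          rw [if_pos (mem_filter.1 hi).2]
          have := div_nonneg (hs i) ha.le
          exact Real.log_le_log (by linarith) (by gcongr; exact hsn i)
      _ = #{i | p i} * Real.log (1 + n / a) := by simp
      _ ≤ q * Real.log (1 + n / a) := by
          gcongr
          exact Real.log_nonneg (by linarith [div_nonneg hn ha.le])
  · calc ∑ i ∈ {i | ¬p i}, Real.log (1 + s i / if p i then a else b)
        ≤ ∑ i ∈ {i | ¬p i}, s i / b := sum_le_sum fun i hi => by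
          rw [if_neg (mem_filter.1 hi).2]
          have := div_nonneg (hs i) hb.le
          linarith [Real.log_le_sub_one_of_pos (x := 1 + s i / b) (by linarith)]
      _ ≤ ∑ i, s i / b :=
          sum_le_sum_of_subset_of_nonneg (filter_subset _ _) fun i _ _ => div_nonneg (hs i) hb.le
      _ = (∑ i, s i) / b := (sum_div _ _ _).symm
      _ ≤ n / b := by gcongr

theorem stmt11_general {d n q : ℕ} (hq1 : 1 ≤ q) (hn : 1 ≤ n)
    (l1 l2 : ℝ) (hl1 : 0 < l1)
    (hl2 : l2 = (n : ℝ) / (q * Real.log (1 + (n : ℝ) / l1)))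
    (A : Fin n → (Fin d → ℝ))
    (hA : ∀ t, ∑ i, (A t i) ^ 2 ≤ 1)
    (Λ : Matrix (Fin d) (Fin d) ℝ)
    (hΛ : Λ = Matrix.diagonal (fun i : Fin d => if (i : ℕ) < q then l1 else l2)) :
    Real.log ((Λ + ∑ t, Matrix.vecMulVec (A t) (A t)).det / Λ.det) ≤
      2 * q * Real.log (1 + (n : ℝ) / l1) := by
  have hn' : (0 : ℝ) < n := by exact_mod_cast hn
  have hL : 0 < Real.log (1 + n / l1) := Real.log_pos (by linarith [div_pos hn' hl1])
  have hl2pos : 0 < l2 := hl2 ▸ div_pos hn' (mul_pos (by exact_mod_cast hq1) hL)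
  have hS : (∑ t, vecMulVec (A t) (A t)).PosSemidef :=
    posSemidef_sum _ fun t _ => posSemidef_vecMulVec_self_star (A t)
  have htr : (∑ t, vecMulVec (A t) (A t)).trace ≤ n := by
    rw [trace_sum_vecMulVec_self]
    exact (sum_le_sum fun t _ => hA t).trans_eq (by simp)
  subst hΛ
  refine (log_det_add_div_det_diagonal_le (fun i => by split_ifs <;> assumption) hS).trans ?_
  refine (sum_log_one_add_div_ite_le _ (Fin.card_filter_val_lt.trans_le (min_le_right _ _)) hl1
    hl2pos (fun i => hS.diag_nonneg) htr).trans_eq ?_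
  rw [hl2]
  field_simp
  ring

/-- Let `Λ = diag(λ₁,...,λ₁, λ₂,...,λ₂)` with the first `q`
entries `λ₁ > 0` and the remaining `d − q` entries
`λ₂ = n/(q log(1 + n/λ₁))`, and let `A₁,...,A_n` have Euclidean norm at most 1.
Then for `V_n = Λ + Σ_t A_t A_tᵀ`,
`log(det(V_n)/det(Λ)) ≤ 2 q log(1 + n/λ₁)`. -/
theorem stmt11 {d n q : ℕ} (hq1 : 1 ≤ q) (hqd : q ≤ d) (hn : 1 ≤ n)
    (l1 l2 : ℝ) (hl1 : 0 < l1)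
    (hl2 : l2 = (n : ℝ) / (q * Real.log (1 + (n : ℝ) / l1)))
    (A : Fin n → (Fin d → ℝ))
    (hA : ∀ t, ∑ i, (A t i) ^ 2 ≤ 1)
    (Λ : Matrix (Fin d) (Fin d) ℝ)
    (hΛ : Λ = Matrix.diagonal (fun i : Fin d => if (i : ℕ) < q then l1 else l2)) :
    Real.log ((Λ + ∑ t, Matrix.vecMulVec (A t) (A t)).det / Λ.det) ≤
      2 * q * Real.log (1 + (n : ℝ) / l1) :=
  stmt11_general hq1 hn l1 l2 hl1 hl2 A hA Λ hΛ
end
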